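/- arXiv:0711.3620 — 12 statements merged into one kernel-verified Lean document; each statement's English description precedes it below -/
import Mathlib

section
/- Let R be a commutative ℚ-algebra, k ≥ 1 an integer, t_1, …, t_k ∈ R parameters and ω_1, …, ω_k ∈ R weights. Define the weighted isobaric sequence P_{ω,0} = 1 and, for n ≥ 1, P_{ω,n} = ∑_α (multinomial coefficient (α_1 + ⋯ + α_k)! / (α_1! ⋯ α_k!)) · ((∑_{j=1}^k α_j ω_j) / (∑_{j=1}^k α_j)) · t_1^{α_1} ⋯ t_k^{α_k}, where the sum runs over all tuples α = (α_1, …, α_k) of natural numbers with ∑_{j=1}^k j·α_j = n (the partitions of n with parts at most k), and division by the natural number ∑ α_j is scalar division in the ℚ-algebra R. Then in R⟦y⟧ one has (1 − (t_1 y + ⋯ + t_k y^k)) · (∑_{n≥0} P_{ω,n} y^n) = 1 + ∑_{j=1}^k (ω_j − 1) t_j y^j; equivalently, ∑_{n≥0} P_{ω,n} y^n = 1 + (ω_1 t_1 y + ⋯ + ω_k t_k y^k)/(1 − P(y)) with P(y) = t_1 y + ⋯ + t_k y^k. -/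
/-!
Let `h_n` be the plain multinomial sums `∑_α |α|!/(α_1!⋯α_k!) t^α` over the same index sets.
The identity `multinomial(α) · α_j = multinomial(α - e_j) · |α|` turns the weighted sum into
`P_{ω,n} = ∑_j ω_j t_j h_{n-j}`, that is `∑_{n≥1} P_{ω,n} yⁿ = (∑_j ω_j t_j y^j) · H(y)` with
`H = ∑ h_n yⁿ`. For `ω = 1` the left side is `H - 1`, so `(1 - P(y)) H = 1`, and multiplying
`1 + (∑_j ω_j t_j y^j) H` by `1 - P(y)` gives the claim. The argument works verbatim for parts
of arbitrary positive sizes `w_j`, with `y^{w_j}` in place of `y^j`.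
-/

open Finset PowerSeries
open scoped Nat

section
variable {ι : Type*} [Fintype ι] [DecidableEq ι]

theorem Nat.multinomial_add_single_mul (β : ι → ℕ) (j : ι) :
    Nat.multinomial univ (β + Pi.single j 1) * (β j + 1) =
      Nat.multinomial univ β * (∑ i, β i + 1) := by
  set α := β + Pi.single j 1
  have hα_erase : ∀ i ∈ univ.erase j, α i = β i := fun i hi => by
    simp [α, ne_of_mem_erase hi]
  have hα_sum : ∑ i, α i = ∑ i, β i + 1 := by
    simp [α, sum_add_distrib]
  have hα_prod : ∏ i, (α i)! = (β j + 1) * ∏ i, (β i)! := by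
    rw [← mul_prod_erase univ _ (mem_univ j), ← mul_prod_erase univ (fun i => (β i)!) (mem_univ j),
      prod_congr rfl fun i hi => congrArg Nat.factorial (hα_erase i hi)]
    simp [α, Nat.factorial_succ, mul_assoc]
  apply Nat.eq_of_mul_eq_mul_left (prod_pos fun i _ => (β i).factorial_pos)
  calc (∏ i, (β i)!) * (Nat.multinomial univ α * (β j + 1))
      = (∏ i, (α i)!) * Nat.multinomial univ α := by rw [hα_prod]; ring
    _ = (∑ i, β i + 1) * ((∏ i, (β i)!) * Nat.multinomial univ β) := by
      rw [Nat.multinomial_spec, Nat.multinomial_spec, hα_sum, Nat.factorial_succ]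
    _ = _ := by ring

def weightedPartitions (w : ι → ℕ) (n : ℕ) : Finset (ι → ℕ) :=
  filter (fun α => ∑ i, w i * α i = n) (Fintype.piFinset fun _ => range (n + 1))

variable {w : ι → ℕ}

theorem mem_weightedPartitions (hw : ∀ i, 0 < w i) {n : ℕ} {α : ι → ℕ} :
    α ∈ weightedPartitions w n ↔ ∑ i, w i * α i = n := by
  refine ⟨fun h => (mem_filter.mp h).2, fun h => mem_filter.mpr ⟨?_, h⟩⟩
  refine Fintype.mem_piFinset.mpr fun i => mem_range_succ_iff.mpr ?_
  calc α i ≤ w i * α i := Nat.le_mul_of_pos_left _ (hw i)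
    _ ≤ n := h ▸ single_le_sum (f := fun i => w i * α i) (fun _ _ => Nat.zero_le _) (mem_univ i)

theorem weightedPartitions_zero : weightedPartitions w 0 = {0} := by
  ext α
  simp +contextual [weightedPartitions, funext_iff]

theorem sum_mul_add_single (β : ι → ℕ) (j : ι) :
    ∑ i, w i * (β + Pi.single j 1 : ι → ℕ) i = ∑ i, w i * β i + w j := by
  simp [mul_add, sum_add_distrib, Pi.single_apply]

theorem sum_weightedPartitions_eq_ite {M : Type*} [AddCommMonoid M] (hw : ∀ i, 0 < w i)
    (n : ℕ) (j : ι) (g : (ι → ℕ) → M) (hg : ∀ α, α j = 0 → g α = 0) :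
    ∑ α ∈ weightedPartitions w n, g α =
      if w j ≤ n then ∑ β ∈ weightedPartitions w (n - w j), g (β + Pi.single j (1 : ℕ)) else 0 := by
  split_ifs with hjn
  · rw [← sum_image fun _ _ _ _ => add_right_cancel]
    symm
    apply sum_subset
    · intro α hα
      obtain ⟨β, hβ, rfl⟩ := mem_image.mp hα
      rw [mem_weightedPartitions hw] at hβ ⊢
      rw [sum_mul_add_single, hβ]
      omega
    · intro α hα hα_not
      apply hg α
      by_contra hαj
      have hα_eq : α - Pi.single j 1 + Pi.single j 1 = α := tsub_add_cancel_of_le fun i => by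
        rcases eq_or_ne i j with rfl | hij
        · simpa [Nat.one_le_iff_ne_zero] using hαj
        · simp [hij]
      refine hα_not (mem_image.mpr ⟨α - Pi.single j 1, ?_, hα_eq⟩)
      rw [mem_weightedPartitions hw] at hα ⊢
      have := sum_mul_add_single (w := w) (α - Pi.single j 1) j
      rw [hα_eq, hα] at this
      omega
  · refine sum_eq_zero fun α hα => hg α ?_
    rw [mem_weightedPartitions hw] at hα
    by_contra hαj
    have : w j * α j ≤ n :=
      hα ▸ single_le_sum (f := fun i => w i * α i) (fun _ _ => Nat.zero_le _) (mem_univ j)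
    have : w j ≤ w j * α j := Nat.le_mul_of_pos_right _ (Nat.pos_of_ne_zero hαj)
    omega

theorem prod_pow_add_single {M : Type*} [CommMonoid M] (t : ι → M) (β : ι → ℕ) (j : ι) :
    ∏ i, t i ^ (β + Pi.single j 1 : ι → ℕ) i = t j * ∏ i, t i ^ β i := by
  rw [mul_comm]
  simp only [Pi.add_apply, pow_add, prod_mul_distrib]
  congr 1
  exact (Fintype.prod_eq_single j fun i hij => by simp [hij]).trans (by simp)

theorem sum_add_single (β : ι → ℕ) (j : ι) : ∑ i, (β + Pi.single j 1 : ι → ℕ) i = ∑ i, β i + 1 := by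
  simp [sum_add_distrib]

theorem multinomial_add_single_mul_inv_smul {R : Type*} [Semiring R] [Algebra ℚ R]
    (β : ι → ℕ) (j : ι) (x : R) :
    (Nat.multinomial univ (β + Pi.single j 1) : R) *
        (((∑ i, (β + Pi.single j 1 : ι → ℕ) i : ℕ) : ℚ)⁻¹ • ((β + Pi.single j 1 : ι → ℕ) j • x)) =
      Nat.multinomial univ β * x := by
  have hN : ((∑ i, β i + 1 : ℕ) : ℚ) ≠ 0 := by positivity
  rw [sum_add_single, mul_smul_comm, ← nsmul_eq_mul, smul_smul, Pi.add_apply, Pi.single_eq_same,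
    Nat.multinomial_add_single_mul, mul_comm, mul_smul, ← Nat.cast_smul_eq_nsmul ℚ (∑ i, β i + 1),
    inv_smul_smul₀ hN, nsmul_eq_mul]

variable {R : Type*} [CommSemiring R]

variable (w) in
def isobaric (t : ι → R) (n : ℕ) : R :=
  ∑ α ∈ weightedPartitions w n, (Nat.multinomial univ α : R) * ∏ i, t i ^ α i

variable (w) in
/-- Since `(0 : ℚ)⁻¹ = 0`, this vanishes at `n = 0`, where the convention is `P_{ω,0} = 1`. -/
def weightedIsobaric [Algebra ℚ R] (t ω : ι → R) (n : ℕ) : R :=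
  ∑ α ∈ weightedPartitions w n, (Nat.multinomial univ α : R) *
    ((((∑ j, α j : ℕ) : ℚ))⁻¹ • (∑ j, (α j : ℕ) • ω j)) * ∏ j, t j ^ α j

theorem isobaric_zero (t : ι → R) : isobaric w t 0 = 1 := by
  simp [isobaric, weightedPartitions_zero, Nat.multinomial]

variable [Algebra ℚ R]

theorem weightedIsobaric_zero (t ω : ι → R) : weightedIsobaric w t ω 0 = 0 := by
  simp [weightedIsobaric, weightedPartitions_zero]

theorem weightedIsobaric_eq_sum (hw : ∀ i, 0 < w i) (t ω : ι → R) (n : ℕ) :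
    weightedIsobaric w t ω n =
      ∑ j, if w j ≤ n then ω j * t j * isobaric w t (n - w j) else 0 := by
  simp only [weightedIsobaric, smul_sum, mul_sum, sum_mul]
  rw [sum_comm]
  refine sum_congr rfl fun j _ => ?_
  rw [sum_weightedPartitions_eq_ite hw n j _ fun α hαj => by simp [hαj]]
  congr 1
  simp only [isobaric, mul_sum, multinomial_add_single_mul_inv_smul, prod_pow_add_single]
  exact sum_congr rfl fun β _ => by ring

theorem weightedIsobaric_one {t : ι → R} {n : ℕ} (hn : n ≠ 0) :
    weightedIsobaric w t (fun _ => 1) n = isobaric w t n := by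
  refine sum_congr rfl fun α hα => ?_
  have hN : ((∑ j, α j : ℕ) : ℚ) ≠ 0 := by
    have hα_ne : α ≠ 0 := by
      rintro rfl
      simp [weightedPartitions, eq_comm, hn] at hα
    exact Nat.cast_ne_zero.mpr (by simpa [funext_iff] using hα_ne)
  rw [← sum_smul, ← Nat.cast_smul_eq_nsmul ℚ (∑ j, α j), inv_smul_smul₀ hN, mul_one]

end

section PowerSeries
variable {ι : Type*} [Fintype ι]

theorem coeff_sum_C_mul_X_pow_mul_mk {R : Type*} [CommSemiring R] (w : ι → ℕ) (a : ι → R)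
    (f : ℕ → R) (n : ℕ) :
    coeff n ((∑ j, C (a j) * X ^ w j) * mk f) =
      ∑ j, if w j ≤ n then a j * f (n - w j) else 0 := by
  simp only [sum_mul, map_sum, mul_assoc, coeff_C_mul, coeff_X_pow_mul', coeff_mk, mul_ite,
    mul_zero]

variable [DecidableEq ι] {w : ι → ℕ} {R : Type*} [CommRing R] [Algebra ℚ R]

theorem mk_weightedIsobaric (hw : ∀ i, 0 < w i) (t ω : ι → R) :
    mk (weightedIsobaric w t ω) = (∑ j, C (ω j * t j) * X ^ w j) * mk (isobaric w t) := by
  ext n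
  rw [coeff_mk, coeff_sum_C_mul_X_pow_mul_mk, weightedIsobaric_eq_sum hw]

theorem one_sub_mul_mk_isobaric (hw : ∀ i, 0 < w i) (t : ι → R) :
    (1 - ∑ j, C (t j) * X ^ w j) * mk (isobaric w t) = 1 := by
  have h := mk_weightedIsobaric hw t fun _ => 1
  simp only [one_mul] at h
  ext n
  rw [sub_mul, one_mul, map_sub, ← h, coeff_mk, coeff_mk, coeff_one]
  rcases eq_or_ne n 0 with rfl | hn
  · simp [isobaric_zero, weightedIsobaric_zero]
  · rw [weightedIsobaric_one hn, sub_self, if_neg hn]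

theorem one_sub_mul_one_add_mk_weightedIsobaric (hw : ∀ i, 0 < w i) (t ω : ι → R) :
    (1 - ∑ j, C (t j) * X ^ w j) * (1 + mk (weightedIsobaric w t ω)) =
      1 + ∑ j, C ((ω j - 1) * t j) * X ^ w j := by
  have hsub : ∑ j, C ((ω j - 1) * t j) * X ^ w j =
      ∑ j, C (ω j * t j) * X ^ w j - ∑ j, C (t j) * X ^ w j := by
    simp only [sub_mul, one_mul, map_sub, sum_sub_distrib]
  rw [mk_weightedIsobaric hw, hsub]
  linear_combination (∑ j, C (ω j * t j) * X ^ w j) * one_sub_mul_mk_isobaric hw t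

end PowerSeries

theorem wip_generating_function_general {R : Type*} [CommRing R] [Algebra ℚ R]
    (k : ℕ) (t ω : Fin k → R) (P : ℕ → R) (hP0 : P 0 = 1)
    (hP : ∀ n, 1 ≤ n →
      P n = ∑ α ∈ Finset.filter (fun α : Fin k → ℕ => ∑ j : Fin k, ((j : ℕ) + 1) * α j = n)
              (Fintype.piFinset fun _ : Fin k => Finset.range (n + 1)),
        (Nat.multinomial Finset.univ α : R) *
          ((((∑ j, α j : ℕ) : ℚ))⁻¹ • (∑ j, (α j : ℕ) • ω j)) *
          ∏ j, t j ^ α j) :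
    (1 - ∑ j : Fin k, PowerSeries.C (t j) * PowerSeries.X ^ ((j : ℕ) + 1)) *
      PowerSeries.mk P =
    1 + ∑ j : Fin k, PowerSeries.C ((ω j - 1) * t j) *
      PowerSeries.X ^ ((j : ℕ) + 1) := by
  have hP_mk : PowerSeries.mk P =
      1 + PowerSeries.mk (weightedIsobaric (fun j : Fin k => (j : ℕ) + 1) t ω) := by
    ext n
    rcases eq_or_ne n 0 with rfl | hn
    · simp [hP0, weightedIsobaric_zero]
    · rw [map_add, coeff_one, if_neg hn, zero_add, coeff_mk, coeff_mk]
      exact hP n (Nat.one_le_iff_ne_zero.mpr hn)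
  rw [hP_mk]
  exact one_sub_mul_one_add_mk_weightedIsobaric (fun j : Fin k => Nat.succ_pos j) t ω

/-- Generating function for the weighted isobaric polynomials:
`(1 - P(y)) · (∑ P_{ω,n} yⁿ) = 1 + ∑ (ω_j - 1) t_j y^j` in `R⟦y⟧`.
Here `t j`, `ω j` for `j : Fin k` stand for `t_{j+1}`, `ω_{j+1}`. -/
theorem wip_generating_function {R : Type*} [CommRing R] [Algebra ℚ R]
    (k : ℕ) (hk : 1 ≤ k) (t ω : Fin k → R) (P : ℕ → R) (hP0 : P 0 = 1)
    (hP : ∀ n, 1 ≤ n →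
      P n = ∑ α ∈ Finset.filter (fun α : Fin k → ℕ => ∑ j : Fin k, ((j : ℕ) + 1) * α j = n)
              (Fintype.piFinset fun _ : Fin k => Finset.range (n + 1)),
        (Nat.multinomial Finset.univ α : R) *
          ((((∑ j, α j : ℕ) : ℚ))⁻¹ • (∑ j, (α j : ℕ) • ω j)) *
          ∏ j, t j ^ α j) :
    (1 - ∑ j : Fin k, PowerSeries.C (t j) * PowerSeries.X ^ ((j : ℕ) + 1)) *
      PowerSeries.mk P =
    1 + ∑ j : Fin k, PowerSeries.C ((ω j - 1) * t j) *
      PowerSeries.X ^ ((j : ℕ) + 1) :=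
  wip_generating_function_general k t ω P hP0 hP
end

section
/- Let R be a commutative ring, let f be the generalized Fibonacci sequence of parameters t_1, …, t_{k₁} ∈ R and g the generalized Fibonacci sequence of parameters u_1, …, u_{k₂} ∈ R. Write the product of the two core polynomials as (X^{k₁} − t_1 X^{k₁−1} − ⋯ − t_{k₁}) · (X^{k₂} − u_1 X^{k₂−1} − ⋯ − u_{k₂}) = X^{k} − v_1 X^{k−1} − ⋯ − v_k with k = k₁ + k₂. Then the Cauchy convolution f ⋆ g is exactly the generalized Fibonacci sequence of parameters v_1, …, v_k (the core of a convolution product is the product of the cores). In particular, if R is an integral domain and t_{k₁} ≠ 0 and u_{k₂} ≠ 0, then v_k = −(−t_{k₁})(−u_{k₂}) ≠ 0, so the degree of a convolution product is the sum of the degrees of the factors. -/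
/-!
Reversing a core polynomial `X ^ k - ∑ wⱼ X ^ (k - j)` gives `1 - ∑ wⱼ X ^ j`, and a sequence `h`
is the GFP sequence of parameters `w` exactly when the power series `∑ hₙ Xⁿ` is the inverse
of this reversed core. Reversal is multiplicative on polynomials of bounded degree and the
Cauchy convolution is the product of power series, so the inverse of the reversed product of
the cores is the convolution `f ⋆ g`. Comparing constant terms of the cores gives the last part.
-/

open Polynomial Finset

namespace GFP

variable {R : Type*} [CommRing R]

noncomputable def core (k : ℕ) (w : ℕ → R) : R[X] :=
  X ^ k - ∑ j ∈ Icc 1 k, C (w j) * X ^ (k - j)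

noncomputable def reversedCore (k : ℕ) (w : ℕ → R) : R[X] :=
  1 - ∑ j ∈ Icc 1 k, C (w j) * X ^ j

lemma natDegree_core_le (k : ℕ) (w : ℕ → R) : (core k w).natDegree ≤ k :=
  (natDegree_sub_le _ _).trans <| max_le (natDegree_X_pow_le k) <|
    natDegree_sum_le_of_forall_le _ _ fun _ _ =>
      (natDegree_C_mul_le _ _).trans <| (natDegree_X_pow_le _).trans (Nat.sub_le _ _)

lemma reflect_core (k : ℕ) (w : ℕ → R) : reflect k (core k w) = reversedCore k w := by
  have reflect_sum : ∀ p : ℕ → R[X],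
      reflect k (∑ j ∈ Icc 1 k, p j) = ∑ j ∈ Icc 1 k, reflect k (p j) := fun p => by
    ext i
    simp only [coeff_reflect, finsetSum_coeff]
  rw [core, reversedCore, reflect_sub, reflect_sum, reflect_monomial, revAt_le le_rfl,
    Nat.sub_self, pow_zero]
  refine congrArg _ (sum_congr rfl fun j hj => ?_)
  rw [reflect_C_mul_X_pow, revAt_le (Nat.sub_le _ _), Nat.sub_sub_self (mem_Icc.mp hj).2]

lemma reversedCore_mul {k₁ k₂ : ℕ} {t u v : ℕ → R}
    (h : core k₁ t * core k₂ u = core (k₁ + k₂) v) :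
    reversedCore k₁ t * reversedCore k₂ u = reversedCore (k₁ + k₂) v := by
  rw [← reflect_core, ← reflect_core, ← reflect_core, ← h,
    reflect_mul _ _ (natDegree_core_le k₁ t) (natDegree_core_le k₂ u)]

lemma coeff_zero_core {k : ℕ} (hk : 1 ≤ k) (w : ℕ → R) : (core k w).coeff 0 = -w k := by
  rw [core, coeff_sub, coeff_X_pow, if_neg (by omega), finsetSum_coeff,
    sum_eq_single_of_mem k (mem_Icc.mpr ⟨hk, le_rfl⟩) fun j hj hjk => ?_]
  · simp
  · rw [coeff_C_mul_X_pow, if_neg (by have := (mem_Icc.mp hj).2; omega)]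

lemma coeff_reversedCore_mul_mk (k : ℕ) (w h : ℕ → R) (n : ℕ) :
    PowerSeries.coeff n ((reversedCore k w : PowerSeries R) * PowerSeries.mk h) =
      h n - ∑ j ∈ Icc 1 (min n k), w j * h (n - j) := by
  have coeff_reversedCore : ∀ i, (reversedCore k w).coeff i =
      (if i = 0 then 1 else 0) - if i ∈ Icc 1 k then w i else 0 := fun i => by
    simp [reversedCore, coeff_C_mul, coeff_X_pow, coeff_one]
  rw [PowerSeries.coeff_mul, Nat.sum_antidiagonal_eq_sum_range_succ_mk]
  simp only [Polynomial.coeff_coe, coeff_reversedCore, PowerSeries.coeff_mk, sub_mul, ite_mul,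
    one_mul, zero_mul, sum_sub_distrib, sum_ite_eq', mem_range, Nat.zero_lt_succ, if_true,
    Nat.sub_zero, ← sum_filter]
  congr 2
  ext j
  simp only [mem_filter, mem_range, mem_Icc, le_min_iff]
  omega

lemma reversedCore_mul_mk_eq_one_iff (k : ℕ) (w h : ℕ → R) :
    (reversedCore k w : PowerSeries R) * PowerSeries.mk h = 1 ↔
      h 0 = 1 ∧ ∀ n, 1 ≤ n → h n = ∑ j ∈ Icc 1 (min n k), w j * h (n - j) := by
  simp only [PowerSeries.ext_iff, coeff_reversedCore_mul_mk, PowerSeries.coeff_one, sub_eq_iff_eq_add]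
  constructor
  · intro hcoeff
    refine ⟨by simpa using hcoeff 0, fun n hn => ?_⟩
    simpa [Nat.one_le_iff_ne_zero.mp hn] using hcoeff n
  · rintro ⟨h0, hrec⟩ n
    rcases Nat.eq_zero_or_pos n with rfl | hn
    · simp [h0]
    · simp [hrec n hn, Nat.pos_iff_ne_zero.mp hn]

lemma mk_convolution (f g : ℕ → R) :
    PowerSeries.mk (fun n => ∑ i ∈ range (n + 1), f i * g (n - i)) =
      PowerSeries.mk f * PowerSeries.mk g := by
  ext n
  rw [PowerSeries.coeff_mul, Nat.sum_antidiagonal_eq_sum_range_succ_mk]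
  simp

end GFP

open Polynomial Finset in
/-- The core of a convolution product of two GFP sequences is the product of the
cores, and (over a domain) the degree of a convolution product is the sum of the
degrees of the factors. -/
theorem core_of_convolution_product {R : Type*} [CommRing R]
    (k₁ k₂ : ℕ) (hk₁ : 1 ≤ k₁) (hk₂ : 1 ≤ k₂) (t u v : ℕ → R) (f g : ℕ → R)
    (hf0 : f 0 = 1)
    (hf : ∀ n, 1 ≤ n → f n = ∑ j ∈ Icc 1 (min n k₁), t j * f (n - j))
    (hg0 : g 0 = 1)
    (hg : ∀ n, 1 ≤ n → g n = ∑ j ∈ Icc 1 (min n k₂), u j * g (n - j))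
    (hv : (X ^ k₁ - ∑ j ∈ Icc 1 k₁, C (t j) * X ^ (k₁ - j)) *
          (X ^ k₂ - ∑ j ∈ Icc 1 k₂, C (u j) * X ^ (k₂ - j)) =
          X ^ (k₁ + k₂) - ∑ j ∈ Icc 1 (k₁ + k₂), C (v j) * X ^ (k₁ + k₂ - j)) :
    ((∑ i ∈ range (0 + 1), f i * g (0 - i)) = 1 ∧
      ∀ n, 1 ≤ n →
        (∑ i ∈ range (n + 1), f i * g (n - i)) =
          ∑ j ∈ Icc 1 (min n (k₁ + k₂)),
            v j * ∑ i ∈ range ((n - j) + 1), f i * g ((n - j) - i)) ∧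
    (IsDomain R → t k₁ ≠ 0 → u k₂ ≠ 0 →
      v (k₁ + k₂) = -((-t k₁) * (-u k₂)) ∧ v (k₁ + k₂) ≠ 0) := by
  change GFP.core k₁ t * GFP.core k₂ u = GFP.core (k₁ + k₂) v at hv
  have hconv : (GFP.reversedCore (k₁ + k₂) v : PowerSeries R) *
      PowerSeries.mk (fun n => ∑ i ∈ range (n + 1), f i * g (n - i)) = 1 := by
    rw [← GFP.reversedCore_mul hv, Polynomial.coe_mul, GFP.mk_convolution, mul_mul_mul_comm,
      (GFP.reversedCore_mul_mk_eq_one_iff k₁ t f).2 ⟨hf0, hf⟩,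
      (GFP.reversedCore_mul_mk_eq_one_iff k₂ u g).2 ⟨hg0, hg⟩, mul_one]
  refine ⟨(GFP.reversedCore_mul_mk_eq_one_iff _ _ _).1 hconv, fun _ ht hu => ?_⟩
  have hv0 : v (k₁ + k₂) = -((-t k₁) * (-u k₂)) := by
    have hcoeff0 := congrArg (coeff · 0) hv
    simp only [mul_coeff_zero, GFP.coeff_zero_core hk₁, GFP.coeff_zero_core hk₂,
      GFP.coeff_zero_core (Nat.le_add_right_of_le hk₁)] at hcoeff0
    rw [hcoeff0, neg_neg]
  exact ⟨hv0, hv0 ▸ neg_ne_zero.2 (mul_ne_zero (neg_ne_zero.2 ht) (neg_ne_zero.2 hu))⟩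
end

section
/- (Busche–Ramanujan identity, second form.) Let R be a commutative ring, t_1, t_2 ∈ R, and let F be the degree-2 generalized Fibonacci sequence: F_0 = 1, F_1 = t_1, and F_n = t_1 F_{n−1} + t_2 F_{n−2} for n ≥ 2. Then for all integers 1 ≤ r ≤ s: F_r·F_s = ∑_{j=0}^{r} (−t_2)^j · F_{r+s−2j}. -/
/-- Busche–Ramanujan identity, second form:
`F_r F_s = ∑_{j=0}^{r} (−t₂)^j F_{r+s−2j}` for a degree-2 GFP sequence. -/
theorem busche_ramanujan_second {R : Type*} [CommRing R] (t₁ t₂ : R) (F : ℕ → R)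
    (hF0 : F 0 = 1) (hF1 : F 1 = t₁)
    (hrec : ∀ n, 2 ≤ n → F n = t₁ * F (n - 1) + t₂ * F (n - 2)) :
    ∀ r s : ℕ, 1 ≤ r → r ≤ s →
      F r * F s = ∑ j ∈ Finset.range (r + 1), (-t₂) ^ j * F (r + s - 2 * j) := by
  -- addition formula
  have add_formula : ∀ m, 1 ≤ m → ∀ n, 1 ≤ n →
      F (m + n) = F m * F n + t₂ * (F (m - 1) * F (n - 1)) := by
    intro m hm
    induction m, hm using Nat.le_induction with
    | base =>
      intro n hn
      have h2 : 2 ≤ 1 + n := by omega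
      rw [hrec (1 + n) h2, hF1, hF0]
      have e1 : 1 + n - 1 = n := by omega
      have e2 : 1 + n - 2 = n - 1 := by omega
      rw [e1, e2]; ring
    | succ m hm ih =>
      intro n hn
      have e0 : m + 1 + n = m + (n + 1) := by omega
      rw [e0, ih (n + 1) (by omega)]
      rw [hrec (n + 1) (by omega), hrec (m + 1) (by omega)]
      have e1 : n + 1 - 1 = n := by omega
      have e2 : n + 1 - 2 = n - 1 := by omega
      have e3 : m + 1 - 1 = m := by omega
      have e4 : m + 1 - 2 = m - 1 := by omega
      rw [e1, e2, e3, e4]; ring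
  suffices h : ∀ r, 1 ≤ r → ∀ s, r ≤ s →
      F r * F s = ∑ j ∈ Finset.range (r + 1), (-t₂) ^ j * F (r + s - 2 * j) by
    intro r s h1 h2; exact h r h1 s h2
  intro r hr1
  induction r, hr1 using Nat.le_induction with
  | base =>
    intro s hs
    rw [Finset.sum_range_succ, Finset.sum_range_one]
    have e1 : 1 + s - 2 * 0 = s + 1 := by omega
    have e2 : 1 + s - 2 * 1 = s - 1 := by omega
    rw [e1, e2, hrec (s + 1) (by omega), hF1]
    have e3 : s + 1 - 1 = s := by omega
    have e4 : s + 1 - 2 = s - 1 := by omega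
    rw [e3, e4]; ring
  | succ r hr ih =>
    intro s hs
    have key : F (r + 1 + s) = F (r + 1) * F s + t₂ * (F r * F (s - 1)) := by
      have := add_formula (r + 1) (by omega) s (by omega)
      simpa using this
    have hih : F r * F (s - 1) =
        ∑ j ∈ Finset.range (r + 1), (-t₂) ^ j * F (r + (s - 1) - 2 * j) :=
      ih (s - 1) (by omega)
    rw [Finset.sum_range_succ']
    have hcong : ∀ j ∈ Finset.range (r + 1),
        (-t₂) ^ (j + 1) * F (r + 1 + s - 2 * (j + 1))
          = -t₂ * ((-t₂) ^ j * F (r + (s - 1) - 2 * j)) := by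
      intro j hj
      rw [Finset.mem_range] at hj
      have e : r + 1 + s - 2 * (j + 1) = r + (s - 1) - 2 * j := by omega
      rw [e, pow_succ]; ring
    rw [Finset.sum_congr rfl hcong, ← Finset.mul_sum, ← hih]
    have e0 : r + 1 + s - 2 * 0 = r + 1 + s := by omega
    rw [e0, pow_zero, key]
    ring
end

section
/- Let R be a commutative ring, t_1, t_2 ∈ R, and let F be the degree-2 generalized Fibonacci sequence: F_0 = 1, F_1 = t_1, and F_n = t_1 F_{n−1} + t_2 F_{n−2} for n ≥ 2. Then for all integers 1 ≤ r ≤ s: t_2·F_{r−1}·F_{s−1} + ∑_{j=1}^{r} (−t_2)^j · F_{r+s−2j} = 0. -/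
/-- The lemma connecting the two Busche–Ramanujan identities:
`t₂ F_{r−1} F_{s−1} + ∑_{j=1}^{r} (−t₂)^j F_{r+s−2j} = 0`. -/
theorem busche_ramanujan_lemma {R : Type*} [CommRing R] (t₁ t₂ : R) (F : ℕ → R)
    (hF0 : F 0 = 1) (hF1 : F 1 = t₁)
    (hrec : ∀ n, 2 ≤ n → F n = t₁ * F (n - 1) + t₂ * F (n - 2)) :
    ∀ r s : ℕ, 1 ≤ r → r ≤ s →
      t₂ * F (r - 1) * F (s - 1) +
        ∑ j ∈ Finset.Icc 1 r, (-t₂) ^ j * F (r + s - 2 * j) = 0 := by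
  have hrec' : ∀ n, F (n + 2) = t₁ * F (n + 1) + t₂ * F n := by
    intro n
    have := hrec (n + 2) (by omega)
    simpa using this
  have key : ∀ m n, F (m + n + 2) = F (m + 1) * F (n + 1) + t₂ * F m * F n := by
    intro m n
    induction n using Nat.twoStepInduction with
    | zero =>
      have h := hrec' m
      rw [hF1, hF0]
      linear_combination h
    | one =>
      have h1 := hrec' (m + 1)
      have h2 := hrec' m
      have h3 := hrec' 0
      rw [show (0:ℕ) + 1 = 1 from rfl, hF1, hF0] at h3
      rw [show m + 1 + 1 = m + 2 by omega] at h1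
      rw [hF1, show (1:ℕ) + 1 = 0 + 2 from rfl]
      linear_combination h1 + t₁ * h2 - F (m + 1) * h3
    | more n ih0 ih1 =>
      have h := hrec' (m + n + 2)
      have h2 := hrec' (n + 1)
      have h3 := hrec' n
      rw [show m + (n + 2) + 2 = m + n + 2 + 2 by omega, show n + 2 + 1 = n + 1 + 2 by omega]
      rw [show m + (n + 1) + 2 = m + n + 2 + 1 by omega, show n + 1 + 1 = n + 2 by omega] at ih1
      rw [show n + 1 + 1 = n + 2 by omega] at h2
      linear_combination h + t₁ * ih1 + t₂ * ih0 - F (m + 1) * h2 - t₂ * F m * h3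
  intro r s hr hrs
  induction r, hr using Nat.le_induction generalizing s with
  | base =>
    rw [Finset.Icc_self, Finset.sum_singleton, hF0]
    have e : 1 + s - 2 * 1 = s - 1 := by omega
    rw [e]
    ring
  | succ r hr IH =>
    obtain ⟨u, rfl⟩ : ∃ u, s = u + 2 := ⟨s - 2, by omega⟩
    obtain ⟨a, rfl⟩ : ∃ a, r = a + 1 := ⟨r - 1, by omega⟩
    have IH' := IH (u + 1) (by omega)
    have hkey := key a u
    have hS : ∑ j ∈ Finset.Icc 1 (a + 1 + 1), (-t₂) ^ j * F (a + 1 + 1 + (u + 2) - 2 * j)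
        = -t₂ * (∑ j ∈ Finset.Icc 1 (a + 1), (-t₂) ^ j * F (a + 1 + (u + 1) - 2 * j)) +
          (-t₂) * F (a + u + 2) := by
      rw [← Finset.Ico_add_one_right_eq_Icc, ← Finset.Ico_add_one_right_eq_Icc, Finset.sum_Ico_eq_sum_range,
        Finset.sum_Ico_eq_sum_range]
      have e1 : a + 1 + 1 + 1 - 1 = a + 1 + 1 := by omega
      have e2 : a + 1 + 1 - 1 = a + 1 := by omega
      rw [e1, e2, Finset.sum_range_succ', Finset.mul_sum]
      congr 1
      · apply Finset.sum_congr rfl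
        intro i hi
        have h1 : a + 1 + 1 + (u + 2) - 2 * (1 + (i + 1)) = a + 1 + (u + 1) - 2 * (1 + i) := by
          omega
        rw [h1]
        ring
      · have h1 : a + 1 + 1 + (u + 2) - 2 * (1 + 0) = a + u + 2 := by omega
        rw [h1]
        ring
    have e3 : a + 1 + 1 - 1 = a + 1 := by omega
    have e4 : u + 2 - 1 = u + 1 := by omega
    have e5 : a + 1 - 1 = a := by omega
    have e6 : u + 1 - 1 = u := by omega
    rw [e3, e4, hS]
    rw [e5, e6] at IH'
    linear_combination (-t₂) * IH' - t₂ * hkey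
end

section
/- Define polynomials F_n in the multivariate polynomial ring ℤ[X_1, X_2, X_3, …] (MvPolynomial over positive natural number indices) by F_0 = 1 and F_n = ∑_{j=1}^{n} X_j · F_{n−j} for n ≥ 1 (these are the generic generalized Fibonacci polynomials). Let φ be the ℤ-algebra homomorphism from this polynomial ring to itself determined by X_j ↦ (−1)^{j+1} F_j. Then for every n ≥ 1, φ(F_n) = (−1)^{n+1} X_n. (In particular t_1 = F_1, −t_2 = F_1² − F_2, t_3 = F_1³ − 2F_1F_2 + F_3, etc.: the parameters are recovered from the GFP polynomials by the substitution t_j ↦ (−1)^{j+1} F_j.) -/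
/-!
Write `F(t) = ∑ Fₙ tⁿ` and `A(t) = ∑ aⱼ tʲ`; the recurrence says `F(t) (1 - A(t)) = 1`.
The substituted parameters `bⱼ = (-1)^(j+1) Fⱼ` have `1 - B(t) = F(-t)`, so the sequence they
generate is `1 / F(-t) = 1 - A(-t)`, whose coefficients are `(-1)^(n+1) aₙ`. Since `φ` is a
ring map, `φ(Fₙ)` satisfies the recurrence with parameters `φ(X_j) = bⱼ`, and the recurrence
has a unique solution.
-/

open Finset

structure IsGFP {R : Type*} [CommRing R] (a F : ℕ → R) : Prop where
  zero : F 0 = 1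
  eq_sum : ∀ n, 1 ≤ n → F n = ∑ j ∈ Icc 1 n, a j * F (n - j)

namespace IsGFP

variable {R : Type*} [CommRing R] {a b F G : ℕ → R}

theorem unique (hF : IsGFP a F) (hG : IsGFP a G) : F = G := by
  funext n
  induction n using Nat.strong_induction_on with
  | _ n ih =>
    rcases Nat.eq_zero_or_pos n with rfl | hn
    · rw [hF.zero, hG.zero]
    · rw [hF.eq_sum n hn, hG.eq_sum n hn]
      refine sum_congr rfl fun j hj => ?_
      rw [ih (n - j) (by grind)]

theorem congr_params (hF : IsGFP a F) (hab : ∀ j, 1 ≤ j → a j = b j) : IsGFP b F where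
  zero := hF.zero
  eq_sum n hn := by
    rw [hF.eq_sum n hn]
    exact sum_congr rfl fun j hj => by rw [hab j (mem_Icc.mp hj).1]

theorem map {S : Type*} [CommRing S] (hF : IsGFP a F) (f : R →+* S) : IsGFP (f ∘ a) (f ∘ F) where
  zero := by simp [hF.zero]
  eq_sum n hn := by simp [hF.eq_sum n hn]

theorem sum_mul_reflect (hF : IsGFP a F) (m : ℕ) :
    ∑ j ∈ Icc 1 m, F j * a (m + 1 - j) = F (m + 1) - a (m + 1) := by
  have hreflect : ∑ j ∈ Icc 1 m, F j * a (m + 1 - j) = ∑ j ∈ Icc 1 m, a j * F (m + 1 - j) := by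
    refine sum_nbij' (fun j => m + 1 - j) (fun j => m + 1 - j) ?_ ?_ ?_ ?_ ?_ <;>
      intro j hj <;> simp only [mem_Icc] at hj ⊢
    · omega
    · omega
    · omega
    · omega
    · rw [mul_comm, Nat.sub_sub_self (by omega)]
  rw [hreflect, hF.eq_sum (m + 1) (by omega), sum_Icc_succ_top (by omega), Nat.sub_self, hF.zero]
  ring

theorem signed_params (hF : IsGFP a F) :
    IsGFP (fun j => (-1) ^ (j + 1) * F j) (fun n => if n = 0 then 1 else (-1) ^ (n + 1) * a n) where
  zero := if_pos rfl
  eq_sum n hn := by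
    obtain ⟨m, rfl⟩ := Nat.exists_eq_add_of_le' hn
    have hterm : ∀ j ∈ Icc 1 m, (-1) ^ (j + 1) * F j *
        (if m + 1 - j = 0 then 1 else (-1) ^ (m + 1 - j + 1) * a (m + 1 - j))
          = (-1) ^ (m + 1) * (F j * a (m + 1 - j)) := by
      intro j hj
      obtain ⟨hj1, hjm⟩ := mem_Icc.mp hj
      have hsign : (-1 : R) ^ (j + 1) * (-1) ^ (m + 1 - j + 1) = (-1) ^ (m + 1) := by
        rw [← pow_add, show j + 1 + (m + 1 - j + 1) = m + 1 + 2 by omega, pow_add]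
        norm_num
      rw [if_neg (by omega), ← hsign]
      ring
    rw [sum_Icc_succ_top (by omega), sum_congr rfl hterm, ← mul_sum, hF.sum_mul_reflect,
      Nat.sub_self, if_pos rfl, if_neg (by omega)]
    ring

theorem eq_of_signed_params (hF : IsGFP a F) (hG : IsGFP (fun j => (-1) ^ (j + 1) * F j) G)
    (n : ℕ) (hn : 1 ≤ n) : G n = (-1) ^ (n + 1) * a n := by
  rw [hG.unique hF.signed_params]
  exact if_neg (by omega)

end IsGFP

open MvPolynomial in
/-- The parameters are recovered from the generic GFP polynomials by the
substitution `t_j ↦ (−1)^{j+1} F_j`: if `φ` is the `ℤ`-algebra endomorphism of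
`ℤ[X₁, X₂, …]` with `φ(X_j) = (−1)^{j+1} F_j`, then `φ(F_n) = (−1)^{n+1} X_n`. -/
theorem gfp_parameter_involution (F : ℕ → MvPolynomial ℕ+ ℤ)
    (hF0 : F 0 = 1)
    (hF : ∀ n, 1 ≤ n →
      F n = ∑ j ∈ (Finset.Icc 1 n).attach,
        (X (⟨j.1, (Finset.mem_Icc.mp j.2).1⟩ : ℕ+) : MvPolynomial ℕ+ ℤ) * F (n - j.1))
    (φ : MvPolynomial ℕ+ ℤ →ₐ[ℤ] MvPolynomial ℕ+ ℤ)
    (hφ : ∀ j : ℕ+, φ (X j) = (-1) ^ ((j : ℕ) + 1) * F (j : ℕ)) :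
    ∀ n : ℕ, ∀ hn : 1 ≤ n,
      φ (F n) = (-1) ^ (n + 1) * X (⟨n, hn⟩ : ℕ+) := by
  have htoPNat : ∀ j (hj : 1 ≤ j), Nat.toPNat' j = ⟨j, hj⟩ := fun _ hj =>
    PNat.eq (PNat.toPNat'_coe hj)
  have hgfp : IsGFP (fun j => X (Nat.toPNat' j)) F := by
    refine ⟨hF0, fun n hn => ?_⟩
    rw [hF n hn, ← sum_attach (Icc 1 n)]
    exact sum_congr rfl fun j _ => by rw [htoPNat j (mem_Icc.mp j.2).1]
  have hφgfp : IsGFP (fun j => (-1) ^ (j + 1) * F j) (φ ∘ F) :=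
    (hgfp.map φ.toRingHom).congr_params fun j hj => by
      simpa [PNat.toPNat'_coe hj] using hφ (Nat.toPNat' j)
  intro n hn
  have hsigned := hgfp.eq_of_signed_params hφgfp n hn
  rwa [htoPNat n hn] at hsigned
end

section
/- Let R be a commutative ring, let t : {n : ℕ // n ≥ 1} → R be a parameter sequence, and let F : ℕ → R be the generalized Fibonacci sequence of t (F 0 = 1 and F n = ∑_{j=1}^{n} t j · F (n−j) for n ≥ 1). Let G : ℕ → R be the Cauchy-convolution inverse of F, i.e. G 0 = 1 and ∑_{j=0}^{n} F j · G (n−j) = 0 for all n ≥ 1. Then G n = −(t n) for all n ≥ 1; moreover, if s : {n : ℕ // n ≥ 1} → R is the (unique) parameter sequence of G, i.e. G n = ∑_{j=1}^{n} s j · G (n−j) for n ≥ 1, then s n = −(F n) for all n ≥ 1. -/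
/-- The Cauchy-convolution inverse `G` of a GFP sequence `F` with parameters `t`
satisfies `G n = −tₙ`; and the parameters of `G` are the negatives of the
values of `F`. -/
theorem gfp_inverse_parameters {R : Type*} [CommRing R]
    (t : {n : ℕ // n ≥ 1} → R) (F G : ℕ → R)
    (hF0 : F 0 = 1)
    (hF : ∀ n, 1 ≤ n →
      F n = ∑ j ∈ (Finset.Icc 1 n).attach,
        t ⟨j.1, (Finset.mem_Icc.mp j.2).1⟩ * F (n - j.1))
    (hG0 : G 0 = 1)
    (hG : ∀ n, 1 ≤ n → ∑ j ∈ Finset.range (n + 1), F j * G (n - j) = 0) :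
    (∀ n : ℕ, ∀ hn : 1 ≤ n, G n = -t ⟨n, hn⟩) ∧
    (∀ s : {n : ℕ // n ≥ 1} → R,
      (∀ n, 1 ≤ n →
        G n = ∑ j ∈ (Finset.Icc 1 n).attach,
          s ⟨j.1, (Finset.mem_Icc.mp j.2).1⟩ * G (n - j.1)) →
      ∀ n : ℕ, ∀ hn : 1 ≤ n, s ⟨n, hn⟩ = -F n) := by
  classical
  set t' : ℕ → R := fun k => if h : 1 ≤ k then t ⟨k, h⟩ else 0 with ht'
  have hF' : ∀ n, 1 ≤ n → F n = ∑ j ∈ Finset.Icc 1 n, t' j * F (n - j) := by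
    intro n hn
    rw [hF n hn, ← Finset.sum_attach (Finset.Icc 1 n) (fun j => t' j * F (n - j))]
    refine Finset.sum_congr rfl (fun j _ => ?_)
    simp [ht', (Finset.mem_Icc.mp j.2).1]
  have hG' : ∀ n, 1 ≤ n → G n + ∑ j ∈ Finset.Icc 1 n, F j * G (n - j) = 0 := by
    intro n hn
    have h := hG n hn
    rw [Finset.sum_range_succ'] at h
    have : ∑ j ∈ Finset.Icc 1 n, F j * G (n - j)
        = ∑ j ∈ Finset.range n, F (j + 1) * G (n - (j + 1)) := by
      rw [← Finset.Ico_add_one_right_eq_Icc, Finset.sum_Ico_eq_sum_range]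
      simp [add_comm 1]
    rw [this]
    simp only [hF0, Nat.sub_zero, one_mul] at h
    linear_combination h
  have reflect : ∀ (m : ℕ) (f g : ℕ → R),
      ∑ j ∈ Finset.Icc 1 m, f j * g (m + 1 - j)
        = ∑ j ∈ Finset.Icc 1 m, g j * f (m + 1 - j) := by
    intro m f g
    refine Finset.sum_nbij' (fun j => m + 1 - j) (fun j => m + 1 - j) ?_ ?_ ?_ ?_ ?_ <;>
      intro j hj <;> simp only [Finset.mem_Icc] at * <;> first
        | omega
        | (have : m + 1 - (m + 1 - j) = j := by omega
           rw [this, mul_comm])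
  have part1 : ∀ n : ℕ, ∀ hn : 1 ≤ n, G n = -t ⟨n, hn⟩ := by
    intro n
    induction n using Nat.strong_induction_on with
    | _ n ih =>
      intro hn
      obtain ⟨m, rfl⟩ : ∃ m, n = m + 1 := ⟨n - 1, by omega⟩
      have hgood : ∀ j ∈ Finset.Icc 1 m, F j * G (m + 1 - j) = -(F j * t' (m + 1 - j)) := by
        intro j hj
        rw [Finset.mem_Icc] at hj
        have h1 : 1 ≤ m + 1 - j := by omega
        rw [ih (m + 1 - j) (by omega) h1, ht']
        simp [h1, mul_comm]
      have e1 := hG' (m + 1) hn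
      rw [Finset.sum_Icc_succ_top hn, Finset.sum_congr rfl hgood, Finset.sum_neg_distrib,
        reflect m F t'] at e1
      have e2 := hF' (m + 1) hn
      rw [Finset.sum_Icc_succ_top hn] at e2
      have ht : t' (m + 1) = t ⟨m + 1, hn⟩ := by simp [ht']
      simp only [Nat.sub_self, hF0, hG0, mul_one] at e1 e2
      rw [← ht]
      linear_combination e1 - e2
  refine ⟨part1, ?_⟩
  intro s hs
  set s' : ℕ → R := fun k => if h : 1 ≤ k then s ⟨k, h⟩ else 0 with hs'
  have hGs : ∀ n, 1 ≤ n → G n = ∑ j ∈ Finset.Icc 1 n, s' j * G (n - j) := by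
    intro n hn
    rw [hs n hn, ← Finset.sum_attach (Finset.Icc 1 n) (fun j => s' j * G (n - j))]
    refine Finset.sum_congr rfl (fun j _ => ?_)
    simp [hs', (Finset.mem_Icc.mp j.2).1]
  intro n
  induction n using Nat.strong_induction_on with
  | _ n ih =>
    intro hn
    obtain ⟨m, rfl⟩ : ∃ m, n = m + 1 := ⟨n - 1, by omega⟩
    have hgood : ∀ j ∈ Finset.Icc 1 m, s' j * G (m + 1 - j) = -(F j * G (m + 1 - j)) := by
      intro j hj
      rw [Finset.mem_Icc] at hj
      have h1 : 1 ≤ j := hj.1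
      have : s' j = -F j := by
        rw [hs']; simp only [h1, dif_pos]
        exact ih j (by omega) h1
      rw [this]; ring
    have e1 := hGs (m + 1) hn
    rw [Finset.sum_Icc_succ_top hn, Finset.sum_congr rfl hgood, Finset.sum_neg_distrib] at e1
    have e2 := hG' (m + 1) hn
    rw [Finset.sum_Icc_succ_top hn] at e2
    have hss : s' (m + 1) = s ⟨m + 1, hn⟩ := by simp [hs']
    simp only [Nat.sub_self, hG0, mul_one] at e1 e2
    rw [← hss]
    linear_combination e2 - e1
end

section
/- Let R be a commutative ring and let F, F′, F″ be the generalized Fibonacci sequences of parameter sequences t, t′, t″ : {n : ℕ // n ≥ 1} → R respectively (each sequence has value 1 at 0 and satisfies its defining recursion). If F = F′ ⋆ F″ (Cauchy convolution), then for every n ≥ 1 the parameters of the product are given by t n = t′ n − ∑_{j=1}^{n−1} t′(n−j) · t″ j + t″ n. -/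
/-! Put the parameters into a power series `T` with zero constant term. The GFP recursion for `F`
says exactly that `(1 - T) * F = 1` in `R⟦X⟧`, and Cauchy convolution is multiplication of power
series, so `F = F' * F''` forces `1 - T = (1 - T') * (1 - T'')`. Comparing coefficients of `X ^ n`
gives the formula. -/

open Finset PowerSeries

namespace GFP

variable {R : Type*} [CommRing R]

noncomputable def paramSeries (t : {n : ℕ // n ≥ 1} → R) : PowerSeries R :=
  mk fun m => if h : 1 ≤ m then t ⟨m, h⟩ else 0

theorem coeff_paramSeries_of_one_le (t : {n : ℕ // n ≥ 1} → R) {n : ℕ} (hn : 1 ≤ n) :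
    coeff n (paramSeries t) = t ⟨n, hn⟩ := by
  simp [paramSeries, hn]

@[simp]
theorem constantCoeff_paramSeries (t : {n : ℕ // n ≥ 1} → R) :
    constantCoeff (paramSeries t) = 0 := by
  simp [paramSeries, ← coeff_zero_eq_constantCoeff_apply]

theorem sum_attach_Icc_eq_sum_coeff_paramSeries (t : {n : ℕ // n ≥ 1} → R) (x : ℕ → R)
    (m : ℕ) :
    ∑ j ∈ (Icc 1 m).attach, t ⟨j.1, (mem_Icc.mp j.2).1⟩ * x j.1 =
      ∑ j ∈ Icc 1 m, coeff j (paramSeries t) * x j := by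
  rw [← sum_attach (Icc 1 m)]
  exact sum_congr rfl fun j _ => by rw [coeff_paramSeries_of_one_le _ (mem_Icc.mp j.2).1]

theorem coeff_paramSeries_mul (t : {n : ℕ // n ≥ 1} → R) (g : PowerSeries R) (n : ℕ) :
    coeff n (paramSeries t * g) =
      ∑ j ∈ (Icc 1 n).attach, t ⟨j.1, (mem_Icc.mp j.2).1⟩ * coeff (n - j.1) g := by
  rw [sum_attach_Icc_eq_sum_coeff_paramSeries t (fun j => coeff (n - j) g), coeff_mul,
    Nat.sum_antidiagonal_eq_sum_range_succ (fun i k => coeff i _ * coeff k g)]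
  refine (sum_subset (fun j hj => ?_) fun j hj hj' => ?_).symm
  · simp only [mem_Icc, mem_range] at hj ⊢; omega
  · obtain rfl : j = 0 := by simp only [mem_Icc, mem_range] at hj hj'; omega
    simp

theorem coeff_paramSeries_mul_paramSeries (t t' : {n : ℕ // n ≥ 1} → R) (n : ℕ) :
    coeff n (paramSeries t * paramSeries t') =
      ∑ j ∈ (Icc 1 (n - 1)).attach,
        t ⟨n - j.1, by have := mem_Icc.mp j.2; omega⟩ * t' ⟨j.1, (mem_Icc.mp j.2).1⟩ := by
  have hattach : ∑ j ∈ (Icc 1 (n - 1)).attach,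
      t ⟨n - j.1, by have := mem_Icc.mp j.2; omega⟩ * t' ⟨j.1, (mem_Icc.mp j.2).1⟩ =
      ∑ j ∈ Icc 1 (n - 1), coeff j (paramSeries t') * coeff (n - j) (paramSeries t) := by
    rw [← sum_attach (Icc 1 (n - 1))]
    refine sum_congr rfl fun j _ => ?_
    have hj := mem_Icc.mp j.2
    rw [coeff_paramSeries_of_one_le _ (by omega : 1 ≤ n - j.1),
      coeff_paramSeries_of_one_le _ hj.1, mul_comm]
  rw [hattach, mul_comm, coeff_mul,
    Nat.sum_antidiagonal_eq_sum_range_succ (fun i k => coeff i (paramSeries t') * coeff k _)]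
  refine (sum_subset (fun j hj => ?_) fun j hj hj' => ?_).symm
  · simp only [mem_Icc, mem_range] at hj ⊢; omega
  · obtain rfl | rfl : j = 0 ∨ j = n := by simp only [mem_Icc, mem_range] at hj hj'; omega
    all_goals simp

theorem one_sub_paramSeries_mul_mk_eq_one (t : {n : ℕ // n ≥ 1} → R) (F : ℕ → R)
    (h0 : F 0 = 1)
    (hrec : ∀ n, 1 ≤ n →
      F n = ∑ j ∈ (Icc 1 n).attach, t ⟨j.1, (mem_Icc.mp j.2).1⟩ * F (n - j.1)) :
    (1 - paramSeries t) * mk F = 1 := by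
  ext n
  rcases Nat.eq_zero_or_pos n with rfl | hn
  · simp [h0]
  · simp [sub_mul, coeff_paramSeries_mul, ← hrec n hn, hn.ne']

theorem mk_eq_mul_mk_of_eq_conv {F F' F'' : ℕ → R}
    (hconv : ∀ n, F n = ∑ j ∈ range (n + 1), F' j * F'' (n - j)) :
    mk F = mk F' * mk F'' := by
  ext n
  simp [coeff_mul, Nat.sum_antidiagonal_eq_sum_range_succ (fun i k => F' i * F'' k), hconv n]

theorem eq_mul_of_mul_eq_one_of_eq_mul {a a' a'' f f' f'' : R} (h : a * f = 1) (h' : a' * f' = 1)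
    (h'' : a'' * f'' = 1) (hf : f = f' * f'') : a = a' * a'' := by
  linear_combination (-a * a'' * f'') * h' - a * h'' - a * a' * a'' * hf + a' * a'' * h

end GFP

/-- If `F = F′ ⋆ F″` (Cauchy convolution) for GFP sequences with parameter
sequences `t, t′, t″`, then `t n = t′ n − ∑_{j=1}^{n−1} t′(n−j) t″ j + t″ n`. -/
theorem gfp_product_parameters {R : Type*} [CommRing R]
    (t t' t'' : {n : ℕ // n ≥ 1} → R) (F F' F'' : ℕ → R)
    (hF0 : F 0 = 1)
    (hF : ∀ n, 1 ≤ n →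
      F n = ∑ j ∈ (Finset.Icc 1 n).attach,
        t ⟨j.1, (Finset.mem_Icc.mp j.2).1⟩ * F (n - j.1))
    (hF'0 : F' 0 = 1)
    (hF' : ∀ n, 1 ≤ n →
      F' n = ∑ j ∈ (Finset.Icc 1 n).attach,
        t' ⟨j.1, (Finset.mem_Icc.mp j.2).1⟩ * F' (n - j.1))
    (hF''0 : F'' 0 = 1)
    (hF'' : ∀ n, 1 ≤ n →
      F'' n = ∑ j ∈ (Finset.Icc 1 n).attach,
        t'' ⟨j.1, (Finset.mem_Icc.mp j.2).1⟩ * F'' (n - j.1))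
    (hconv : ∀ n, F n = ∑ j ∈ Finset.range (n + 1), F' j * F'' (n - j)) :
    ∀ n : ℕ, ∀ hn : 1 ≤ n,
      t ⟨n, hn⟩ =
        t' ⟨n, hn⟩ -
          (∑ j ∈ (Finset.Icc 1 (n - 1)).attach,
            t' ⟨n - j.1, by have := Finset.mem_Icc.mp j.2; omega⟩ *
            t'' ⟨j.1, (Finset.mem_Icc.mp j.2).1⟩) +
        t'' ⟨n, hn⟩ := by
  intro n hn
  have hseries : 1 - GFP.paramSeries t =
      (1 - GFP.paramSeries t') * (1 - GFP.paramSeries t'') :=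
    GFP.eq_mul_of_mul_eq_one_of_eq_mul (GFP.one_sub_paramSeries_mul_mk_eq_one t F hF0 hF)
      (GFP.one_sub_paramSeries_mul_mk_eq_one t' F' hF'0 hF')
      (GFP.one_sub_paramSeries_mul_mk_eq_one t'' F'' hF''0 hF'') (GFP.mk_eq_mul_mk_of_eq_conv hconv)
  have hcoeff := congrArg (coeff n) hseries
  simp only [sub_mul, mul_sub, one_mul, mul_one, map_sub, coeff_one, if_neg (by omega : n ≠ 0),
    GFP.coeff_paramSeries_of_one_le _ hn, GFP.coeff_paramSeries_mul_paramSeries] at hcoeff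
  linear_combination -hcoeff
end

section
/- Let p be a prime and let β_1, …, β_r be completely multiplicative arithmetic functions with values in ℂ such that β_i(p) ≠ 0 for each i. Let α = β_1 ⋆ β_2 ⋆ ⋯ ⋆ β_r (Dirichlet convolution). Then: (a) the Dirichlet inverse satisfies α⁻¹(p^n) = 0 for all n > r (a positive function has finite domain at p); and (b) α(p^n) ≠ 0 for infinitely many n (a positive function has infinite range at p). -/
/-!
The Bell series `f ↦ ∑ f(pⁿ) Xⁿ` is a ring homomorphism from arithmetic functions to power series.
A completely multiplicative `β` has the geometric Bell series `1 / (1 - β(p) X)`, so the Bell series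
of `α` is the inverse of the polynomial `Q = ∏ (1 - βᵢ(p) X)`, which has degree exactly `r`.
Hence the Bell series of `α⁻¹` is `Q`, giving (a); and the Bell series of `α` is not a polynomial,
since `Q` is not a unit of `ℂ[X]`, giving (b).
-/

/-- An arithmetic function is completely multiplicative if it takes value 1 at 1
and is fully multiplicative on positive arguments. -/
def IsCompletelyMultiplicative (f : ArithmeticFunction ℂ) : Prop :=
  f 1 = 1 ∧ ∀ m n : ℕ, 1 ≤ m → 1 ≤ n → f (m * n) = f m * f n

open Finset PowerSeries

theorem PowerSeries.mk_pow_mul_one_sub_C_mul_X_eq_one {S : Type*} [CommRing S] (b : S) :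
    (mk fun n => b ^ n) * (1 - C b * X) = 1 := by
  simpa [rescale_mk, rescale_X] using congrArg (rescale b) (mk_one_mul_one_sub_eq_one S)

theorem PowerSeries.exists_coe_eq_of_finite_setOf_coeff_ne_zero {R : Type*} [Semiring R]
    {φ : R⟦X⟧} (h : {n | coeff n φ ≠ 0}.Finite) : ∃ P : Polynomial R, (P : R⟦X⟧) = φ := by
  obtain ⟨N, hN⟩ := h.bddAbove
  refine ⟨trunc (N + 1) φ, PowerSeries.ext fun n => ?_⟩
  rw [Polynomial.coeff_coe, coeff_trunc]
  split_ifs with hn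
  · rfl
  · by_contra hne
    exact hn (Nat.lt_succ_of_le (hN (Ne.symm hne)))

theorem PowerSeries.infinite_setOf_coeff_ne_zero_of_mul_eq_one {R : Type*} [CommRing R]
    [IsDomain R] {φ : R⟦X⟧} {Q : Polynomial R} (h : φ * Q = 1) (hQ : 0 < Q.natDegree) :
    {n | coeff n φ ≠ 0}.Infinite := by
  intro hfin
  obtain ⟨P, rfl⟩ := exists_coe_eq_of_finite_setOf_coeff_ne_zero hfin
  have hPQ : P * Q = 1 := by exact_mod_cast h
  exact hQ.ne' (Polynomial.natDegree_eq_zero_of_isUnit (IsUnit.of_mul_eq_one_right P hPQ))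

theorem Polynomial.natDegree_prod_one_sub_C_mul_X {R ι : Type*} [CommRing R] [IsDomain R]
    (s : Finset ι) {b : ι → R} (hb : ∀ i ∈ s, b i ≠ 0) :
    (∏ i ∈ s, (1 - C (b i) * X)).natDegree = #s := by
  have h1 : ∀ i ∈ s, (1 - C (b i) * X).natDegree = 1 := fun i hi => by
    rw [natDegree_sub_eq_right_of_natDegree_lt] <;> simp [hb i hi]
  rw [natDegree_prod _ _ fun i hi => ne_zero_of_natDegree_gt (h1 i hi).symm.le,
    Finset.card_eq_sum_ones]
  exact Finset.sum_congr rfl h1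

namespace ArithmeticFunction

variable {R : Type*} [Semiring R] {p : ℕ}

theorem mul_apply_prime_pow (hp : p.Prime) (f g : ArithmeticFunction R) (n : ℕ) :
    (f * g) (p ^ n) = ∑ ij ∈ antidiagonal n, f (p ^ ij.1) * g (p ^ ij.2) := by
  rw [mul_apply, Nat.sum_divisorsAntidiagonal (fun a b => f a * g b), Nat.sum_divisors_prime_pow hp,
    Finset.Nat.sum_antidiagonal_eq_sum_range_succ (fun i j => f (p ^ i) * g (p ^ j))]
  refine Finset.sum_congr rfl fun k hk => ?_
  rw [Nat.pow_div (by simpa [Nat.lt_succ_iff] using hk) hp.pos]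

theorem one_apply_prime_pow (hp : p.Prime) (n : ℕ) :
    (1 : ArithmeticFunction R) (p ^ n) = if n = 0 then 1 else 0 := by
  simp [one_apply, hp.ne_one]

noncomputable def bellSeries (hp : p.Prime) : ArithmeticFunction R →+* R⟦X⟧ where
  toFun f := mk fun n => f (p ^ n)
  map_one' := by ext n; simp [one_apply_prime_pow hp, coeff_one]
  map_mul' f g := by ext n; simp [coeff_mul, mul_apply_prime_pow hp]
  map_zero' := by ext; simp
  map_add' f g := by ext; simp

@[simp]
theorem coeff_bellSeries (hp : p.Prime) (f : ArithmeticFunction R) (n : ℕ) :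
    coeff n (bellSeries hp f) = f (p ^ n) := by
  simp [bellSeries]

end ArithmeticFunction

namespace IsCompletelyMultiplicative

open ArithmeticFunction

theorem apply_pow {f : ArithmeticFunction ℂ} (hf : IsCompletelyMultiplicative f) {m : ℕ}
    (hm : 1 ≤ m) (n : ℕ) : f (m ^ n) = f m ^ n := by
  induction n with
  | zero => simpa using hf.1
  | succ n ih => rw [pow_succ, hf.2 _ _ (Nat.one_le_pow _ _ hm) hm, ih, pow_succ]

theorem bellSeries_mul_one_sub {f : ArithmeticFunction ℂ} (hf : IsCompletelyMultiplicative f)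
    {p : ℕ} (hp : p.Prime) :
    bellSeries hp f * ((1 - Polynomial.C (f p) * Polynomial.X : Polynomial ℂ) : ℂ⟦X⟧) = 1 := by
  have : bellSeries hp f = mk fun n => f p ^ n := by
    ext n; simp [hf.apply_pow hp.one_lt.le]
  rw [this]
  push_cast
  exact mk_pow_mul_one_sub_C_mul_X_eq_one _

end IsCompletelyMultiplicative

/-- A positive multiplicative function (a Dirichlet product of `r` completely
multiplicative functions, each nonzero at `p`) is of type `(∞, fin)` at `p`:
its Dirichlet inverse vanishes at `pⁿ` for `n > r`, while it itself is nonzero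
at infinitely many powers of `p`. -/
theorem positive_function_type_two (p : ℕ) (hp : p.Prime)
    (r : ℕ) (hr : 1 ≤ r) (β : Fin r → ArithmeticFunction ℂ)
    (hβ : ∀ i, IsCompletelyMultiplicative (β i))
    (hβp : ∀ i, (β i) p ≠ 0)
    (α αinv : ArithmeticFunction ℂ) (hα : α = ∏ i, β i)
    (hαinv : α * αinv = 1) :
    (∀ n : ℕ, r < n → αinv (p ^ n) = 0) ∧
    {n : ℕ | α (p ^ n) ≠ 0}.Infinite := by
  set B := ArithmeticFunction.bellSeries (R := ℂ) hp
  set Q : Polynomial ℂ := ∏ i, (1 - Polynomial.C (β i p) * Polynomial.X)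
  have hQ : Q.natDegree = r := by
    simpa using Polynomial.natDegree_prod_one_sub_C_mul_X univ fun i _ => hβp i
  have hαQ : B α * Q = 1 := by
    rw [hα, map_prod, ← Polynomial.coeToPowerSeries.ringHom_apply, map_prod, ← prod_mul_distrib]
    exact prod_eq_one fun i _ => (hβ i).bellSeries_mul_one_sub hp
  have hαinvQ : B αinv = Q :=
    (left_inv_eq_right_inv (mul_comm (B α) Q ▸ hαQ)
      (by rw [← map_mul, hαinv, map_one])).symm
  refine ⟨fun n hn => ?_, ?_⟩
  · rw [← ArithmeticFunction.coeff_bellSeries hp, hαinvQ, Polynomial.coeff_coe]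
    exact Polynomial.coeff_eq_zero_of_natDegree_lt (hQ ▸ hn)
  · simpa [B] using infinite_setOf_coeff_ne_zero_of_mul_eq_one hαQ (hQ ▸ hr)
end

section
/- (Multiplicativity of the Kesava Menon norm, local form.) Let R be a commutative ring. For a sequence f : ℕ → R define its norm sequence N(f) : ℕ → R by N(f)(n) = ∑_{j=0}^{2n} (−1)^j · f(j) · f(2n−j). Then for any two sequences f, g : ℕ → R, N(f ⋆ g) = N(f) ⋆ N(g), where ⋆ denotes Cauchy convolution: (f ⋆ g)(n) = ∑_{j=0}^{n} f(j)·g(n−j). -/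
/-- Cauchy convolution of sequences. -/
def cauchyConv {R : Type*} [CommRing R] (f g : ℕ → R) : ℕ → R :=
  fun n => ∑ j ∈ Finset.range (n + 1), f j * g (n - j)

/-- The local Kesava Menon norm of a sequence:
`N(f)(n) = ∑_{j=0}^{2n} (−1)^j f(j) f(2n−j)`. -/
def kmNorm {R : Type*} [CommRing R] (f : ℕ → R) : ℕ → R :=
  fun n => ∑ j ∈ Finset.range (2 * n + 1), (-1 : R) ^ j * f j * f (2 * n - j)

/-!
In power series language, Cauchy convolution is multiplication, and the norm of `f` is the
even power series `F(-X) F(X)` read in the variable `X²`, where `F = ∑ f(n) Xⁿ`. Since both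
`F ↦ F(-X)` and `X ↦ X²` are ring homomorphisms (the latter injective), multiplicativity of the
norm is just `(FG)(-X) (FG)(X) = F(-X) F(X) · G(-X) G(X)`.
-/

namespace PowerSeries

variable {R : Type*} [CommRing R]

theorem mk_injective : Function.Injective (mk : (ℕ → R) → R⟦X⟧) := fun f g h ↦
  funext fun n ↦ by simpa using congr(coeff n $h)

theorem expand_injective (p : ℕ) (hp : p ≠ 0) :
    Function.Injective (expand p hp : R⟦X⟧ →ₐ[R] R⟦X⟧) := fun φ ψ h ↦ by
  ext m
  rw [← coeff_expand_mul p hp, h, coeff_expand_mul]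

theorem mk_cauchyConv (f g : ℕ → R) : mk (cauchyConv f g) = mk f * mk g := by
  ext n
  rw [coeff_mul, Finset.Nat.sum_antidiagonal_eq_sum_range_succ_mk]
  simp [cauchyConv]

/- Pairing the terms `(i, j)` and `(j, i)`, of opposite signs, works in every characteristic;
invariance of `φ(-X) φ(X)` under `X ↦ -X` would only give `2 c = 0`. -/
theorem coeff_rescale_neg_one_mul_self_of_odd (φ : R⟦X⟧) {n : ℕ} (hn : Odd n) :
    coeff n (rescale (-1) φ * φ) = 0 := by
  rw [coeff_mul]
  refine Finset.sum_involution (fun p _ ↦ p.swap) (fun p hp ↦ ?_) (fun p hp _ ↦ ?_)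
    (fun p hp ↦ by simpa [add_comm] using hp) (fun p _ ↦ p.swap_swap)
  all_goals rw [Finset.HasAntidiagonal.mem_antidiagonal] at hp
  · have hsign : (-1 : R) ^ p.1 * (-1) ^ p.2 = -1 := by rw [← pow_add, hp, hn.neg_one_pow]
    have hsign' : (-1 : R) ^ p.2 = -(-1) ^ p.1 := by
      rcases neg_one_pow_eq_or R p.1 with h | h <;> rw [h] at hsign ⊢
      · linear_combination hsign
      · linear_combination -hsign
    simp only [coeff_rescale, Prod.fst_swap, Prod.snd_swap, hsign']
    ring
  · intro h
    have hdiag : p.2 = p.1 := congr(Prod.fst $h)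
    obtain ⟨k, hk⟩ := hn
    omega

theorem expand_two_mk_kmNorm (f : ℕ → R) :
    expand 2 two_ne_zero (mk (kmNorm f)) = rescale (-1) (mk f) * mk f := by
  ext n
  rw [coeff_expand]
  split_ifs with hn
  · obtain ⟨m, rfl⟩ := hn
    rw [coeff_mk, coeff_mul, Finset.Nat.sum_antidiagonal_eq_sum_range_succ
      (fun i j ↦ coeff i (rescale (-1) (mk f)) * coeff j (mk f))]
    simp [kmNorm, coeff_rescale, mul_assoc]
  · rw [coeff_rescale_neg_one_mul_self_of_odd _ (Nat.odd_iff.mpr (by omega))]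

end PowerSeries

/-- The Kesava Menon norm is multiplicative with respect to Cauchy
convolution: `N(f ⋆ g) = N(f) ⋆ N(g)`. -/
theorem kmNorm_cauchyConv {R : Type*} [CommRing R] (f g : ℕ → R) :
    kmNorm (cauchyConv f g) = cauchyConv (kmNorm f) (kmNorm g) := by
  apply PowerSeries.mk_injective
  apply PowerSeries.expand_injective 2 two_ne_zero
  simp only [PowerSeries.mk_cauchyConv, map_mul, PowerSeries.expand_two_mk_kmNorm]
  ring
end

section
/- (Binomial identity for specially multiplicative functions.) Let γ_1 and γ_2 be completely multiplicative arithmetic functions with values in ℂ and let α = γ_1 ⋆ γ_2 (Dirichlet convolution). Then for every prime p and every n ≥ 0: α(p^n) = ∑_{j=0}^{⌊n/2⌋} (−1)^j · C(n−j, j) · α(p)^{n−2j} · (γ_1(p)·γ_2(p))^j, where C(n−j, j) is the binomial coefficient. -/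
open Finset

namespace BinomAux

noncomputable def L (x y : ℂ) (n : ℕ) : ℂ := ∑ i ∈ range (n+1), x^i * y^(n-i)

noncomputable def T (x y : ℂ) (n j : ℕ) : ℂ :=
  (-1:ℂ)^j * (Nat.choose (n-j) j : ℂ) * (x+y)^(n-2*j) * (x*y)^j

noncomputable def R (x y : ℂ) (n : ℕ) : ℂ := ∑ j ∈ range (n+1), T x y n j

lemma T_eq_zero (x y : ℂ) {n j : ℕ} (h : n < 2*j) : T x y n j = 0 := by
  have : (n-j).choose j = 0 := Nat.choose_eq_zero_of_lt (by omega)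
  simp [T, this]

lemma L_rec (x y : ℂ) (n : ℕ) :
    L x y (n+2) = (x+y) * L x y (n+1) - x*y * L x y n := by
  have h1 : L x y (n+2) = y^(n+2) + x * L x y (n+1) := by
    rw [L, Finset.sum_range_succ']
    have hterm : ∀ i ∈ range (n+2), x^(i+1) * y^(n+2-(i+1)) = x * (x^i * y^(n+1-i)) := by
      intro i _
      have : n+2-(i+1) = n+1-i := by omega
      rw [this]; ring
    rw [Finset.sum_congr rfl hterm, ← Finset.mul_sum, L]
    simp only [Nat.sub_zero, pow_zero, one_mul]
    ring
  have h2 : y * L x y (n+1) = y^(n+2) + x*y * L x y n := by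
    rw [L, Finset.mul_sum]
    have hterm : ∀ i ∈ range (n+2), y * (x^i * y^(n+1-i)) = x^i * y^(n+2-i) := by
      intro i hi
      have hi' : i < n+2 := mem_range.mp hi
      have : n+2-i = (n+1-i)+1 := by omega
      rw [this]; ring
    rw [Finset.sum_congr rfl hterm, Finset.sum_range_succ']
    have hterm2 : ∀ i ∈ range (n+1), x^(i+1) * y^(n+2-(i+1)) = x*y * (x^i * y^(n-i)) := by
      intro i hi
      have hi' : i < n+1 := mem_range.mp hi
      have : n+2-(i+1) = (n-i)+1 := by omega
      rw [this]; ring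
    rw [Finset.sum_congr rfl hterm2, ← Finset.mul_sum, L]
    simp only [Nat.sub_zero, pow_zero, one_mul]
    ring
  linear_combination h1 - h2

lemma R_rec (x y : ℂ) (n : ℕ) :
    R x y (n+2) = (x+y) * R x y (n+1) - x*y * R x y n := by
  have hs : (x+y) * R x y (n+1)
      = (x+y)^(n+2) + ∑ j ∈ range (n+1),
          (-1:ℂ)^(j+1) * ((n-j).choose (j+1) : ℂ) * (x+y)^(n-2*j) * (x*y)^(j+1) := by
    rw [R, Finset.mul_sum, Finset.sum_range_succ']
    have hterm : ∀ j ∈ range (n+1), (x+y) * T x y (n+1) (j+1)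
        = (-1:ℂ)^(j+1) * ((n-j).choose (j+1) : ℂ) * (x+y)^(n-2*j) * (x*y)^(j+1) := by
      intro j _
      by_cases h : 2*(j+1) ≤ n+1
      · have e1 : n+1-(j+1) = n-j := by omega
        have e2 : n+1-2*(j+1) + 1 = n-2*j := by omega
        rw [T, e1, ← e2, pow_succ]
        ring
      · have h0 : T x y (n+1) (j+1) = 0 := T_eq_zero x y (by omega)
        have hc : (n-j).choose (j+1) = 0 := Nat.choose_eq_zero_of_lt (by omega)
        rw [h0, hc]
        simp
    rw [Finset.sum_congr rfl hterm]
    have h0 : (x+y) * T x y (n+1) 0 = (x+y)^(n+2) := by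
      rw [T]
      simp [pow_succ]
      ring
    rw [h0, add_comm]
  have hq : ∑ j ∈ range (n+1),
        (-1:ℂ)^(j+1) * ((n-j).choose j : ℂ) * (x+y)^(n-2*j) * (x*y)^(j+1)
      = -(x*y * R x y n) := by
    rw [R, Finset.mul_sum, ← Finset.sum_neg_distrib]
    apply Finset.sum_congr rfl
    intro j _
    rw [T, pow_succ]
    ring
  have hR : R x y (n+2)
      = (x+y)^(n+2) + ∑ j ∈ range (n+1),
          ((-1:ℂ)^(j+1) * ((n-j).choose (j+1) : ℂ) * (x+y)^(n-2*j) * (x*y)^(j+1)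
           + (-1:ℂ)^(j+1) * ((n-j).choose j : ℂ) * (x+y)^(n-2*j) * (x*y)^(j+1)) := by
    rw [R, Finset.sum_range_succ, Finset.sum_range_succ']
    have hlast : T x y (n+2) (n+2) = 0 := T_eq_zero x y (by omega)
    rw [hlast, add_zero]
    have hterm : ∀ j ∈ range (n+1), T x y (n+2) (j+1)
        = (-1:ℂ)^(j+1) * ((n-j).choose (j+1) : ℂ) * (x+y)^(n-2*j) * (x*y)^(j+1)
           + (-1:ℂ)^(j+1) * ((n-j).choose j : ℂ) * (x+y)^(n-2*j) * (x*y)^(j+1) := by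
      intro j hj
      have hj' : j < n+1 := mem_range.mp hj
      have hpascal : (n+2-(j+1)).choose (j+1) = (n-j).choose (j+1) + (n-j).choose j := by
        have e : n+2-(j+1) = (n-j)+1 := by omega
        rw [e, Nat.choose_succ_succ']
        omega
      have e2 : n+2-2*(j+1) = n-2*j := by omega
      rw [T, hpascal, e2]
      push_cast
      ring
    rw [Finset.sum_congr rfl hterm]
    have h0 : T x y (n+2) 0 = (x+y)^(n+2) := by
      rw [T]; simp
    rw [h0, add_comm]
  rw [hR, Finset.sum_add_distrib, hq]
  linear_combination -hs

lemma L_eq_R (x y : ℂ) (n : ℕ) : L x y n = R x y n := by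
  have h0 : L x y 0 = R x y 0 := by simp [L, R, T]
  have h1 : L x y 1 = R x y 1 := by
    rw [L, R]
    simp [Finset.sum_range_succ, T]
    ring
  have key : ∀ n, L x y n = R x y n ∧ L x y (n+1) = R x y (n+1) := by
    intro n
    induction n with
    | zero => exact ⟨h0, h1⟩
    | succ k ih => exact ⟨ih.2, by rw [L_rec, R_rec, ih.1, ih.2]⟩
  exact (key n).1

lemma cm_pow (f : ArithmeticFunction ℂ) (h : IsCompletelyMultiplicative f)
    {p : ℕ} (hp : 1 ≤ p) (i : ℕ) : f (p^i) = f p ^ i := by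
  induction i with
  | zero => simpa using h.1
  | succ k ih =>
    rw [pow_succ, h.2 _ _ (Nat.one_le_pow _ _ hp) hp, ih, pow_succ]

end BinomAux

/-- Binomial identity for specially multiplicative functions: if
`α = γ₁ ⋆ γ₂` with `γ₁, γ₂` completely multiplicative, then
`α(pⁿ) = ∑_{j=0}^{⌊n/2⌋} (−1)^j C(n−j, j) α(p)^{n−2j} (γ₁(p)γ₂(p))^j`. -/
theorem binomial_identity (γ₁ γ₂ α : ArithmeticFunction ℂ)
    (h₁ : IsCompletelyMultiplicative γ₁) (h₂ : IsCompletelyMultiplicative γ₂)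
    (hα : α = γ₁ * γ₂) :
    ∀ p : ℕ, p.Prime → ∀ n : ℕ,
      α (p ^ n) = ∑ j ∈ Finset.range (n / 2 + 1),
        (-1 : ℂ) ^ j * (Nat.choose (n - j) j : ℂ) * α p ^ (n - 2 * j) *
          (γ₁ p * γ₂ p) ^ j := by
  intro p hp n
  have hp1 : 1 ≤ p := hp.one_lt.le
  set x := γ₁ p with hx
  set y := γ₂ p with hy
  have hαpk : ∀ k : ℕ, α (p^k) = BinomAux.L x y k := by
    intro k
    rw [hα, ArithmeticFunction.mul_apply, BinomAux.L,
      Nat.sum_divisorsAntidiagonal (f := fun a b => γ₁ a * γ₂ b),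
      Nat.sum_divisors_prime_pow hp]
    apply Finset.sum_congr rfl
    intro i hi
    have hi' : i ≤ k := Nat.lt_succ_iff.mp (Finset.mem_range.mp hi)
    rw [Nat.pow_div hi' hp.pos, BinomAux.cm_pow γ₁ h₁ hp1, BinomAux.cm_pow γ₂ h₂ hp1]
  have hαp : α p = x + y := by
    have h := hαpk 1
    rw [pow_one] at h
    rw [h, BinomAux.L]
    simp [Finset.sum_range_succ]
    ring
  rw [hαpk n, BinomAux.L_eq_R x y n, hαp, BinomAux.R]
  symm
  refine Finset.sum_subset (Finset.range_subset_range.mpr (by omega)) ?_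
  intro j _ hj'
  refine BinomAux.T_eq_zero x y ?_
  simp only [Finset.mem_range, not_lt] at hj'
  omega
end

section
/- (Periodicity criterion.) Let k ≥ 1 and let λ_1, …, λ_k ∈ ℂ be nonzero and pairwise distinct. Let f : ℕ → ℂ be the sequence with generating function ∏_{i=1}^{k} 1/(1 − λ_i y), i.e. (∏_{i=1}^{k}(1 − λ_i y)) · (∑_{n≥0} f_n y^n) = 1 in ℂ⟦y⟧. Then f is periodic (there exists d ≥ 1 with f(n+d) = f(n) for all n ≥ 0) if and only if every λ_i is a root of unity (for each i there exists m ≥ 1 with λ_i^m = 1). -/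
/-!
With `P = ∏ (1 - λᵢ X)`, the sequence `f` is the expansion of `1 / P`, and `f` has period `d`
exactly when `(1 - X ^ d) / P` is a polynomial of degree `< d`; as `deg P = k ≥ 1`, this just
says `P ∣ 1 - X ^ d`.
The factors `1 - λᵢ X` are pairwise coprime, so this says that each `1 - λᵢ X` divides
`1 - X ^ d`, i.e. `λᵢ ^ d = 1`.
-/

open Polynomial
open scoped PowerSeries

section Periodic

variable {R : Type*} [CommRing R] {f : ℕ → R} {d : ℕ}

theorem PowerSeries.coeff_add_one_sub_X_pow_mul_mk (f : ℕ → R) (n d : ℕ) :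
    PowerSeries.coeff (n + d) ((1 - PowerSeries.X ^ d) * PowerSeries.mk f) = f (n + d) - f n := by
  rw [sub_mul, one_mul, map_sub, PowerSeries.coeff_X_pow_mul, PowerSeries.coeff_mk,
    PowerSeries.coeff_mk]

theorem periodic_iff_exists_degree_lt :
    Function.Periodic f d ↔
      ∃ Q : R[X], Q.degree < d ∧ (1 - PowerSeries.X ^ d) * PowerSeries.mk f = (Q : R⟦X⟧) := by
  constructor
  · intro hf
    set S := (1 - PowerSeries.X ^ d) * PowerSeries.mk f with hS
    refine ⟨S.trunc d, PowerSeries.degree_trunc_lt S d, ?_⟩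
    have hshift : PowerSeries.mk (fun n ↦ PowerSeries.coeff (n + d) S) = 0 := by
      ext n
      simp [hS, PowerSeries.coeff_add_one_sub_X_pow_mul_mk, hf n]
    conv_lhs => rw [PowerSeries.eq_X_pow_mul_shift_add_trunc d S, hshift, mul_zero, zero_add]
  · rintro ⟨Q, hQ, hfQ⟩ n
    have := congrArg (PowerSeries.coeff (n + d)) hfQ
    rw [PowerSeries.coeff_add_one_sub_X_pow_mul_mk, Polynomial.coeff_coe,
      coeff_eq_zero_of_degree_lt (hQ.trans_le (by exact_mod_cast Nat.le_add_left d n))] at this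
    exact sub_eq_zero.mp this

theorem degree_lt_of_mul_eq_one_sub_X_pow [IsDomain R] {P Q : R[X]} (hP : 0 < P.degree)
    (h : P * Q = 1 - X ^ d) : Q.degree < d := by
  rcases eq_or_ne Q 0 with rfl | hQ
  · simp
  have hPQ : P.natDegree + Q.natDegree ≤ d := by
    rw [← natDegree_mul (ne_zero_of_degree_gt hP) hQ, h]
    exact (natDegree_sub_le _ _).trans (by simp)
  have := natDegree_pos_iff_degree_pos.mpr hP
  exact degree_le_natDegree.trans_lt (by exact_mod_cast (by omega : Q.natDegree < d))

theorem periodic_iff_dvd_one_sub_X_pow [IsDomain R] {P : R[X]} (hP : 0 < P.degree)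
    (hF : (P : R⟦X⟧) * PowerSeries.mk f = 1) :
    Function.Periodic f d ↔ P ∣ 1 - X ^ d := by
  have hcoe : ((1 - X ^ d : R[X]) : R⟦X⟧) = 1 - PowerSeries.X ^ d := by simp
  rw [periodic_iff_exists_degree_lt]
  constructor
  · rintro ⟨Q, -, hQ⟩
    refine ⟨Q, Polynomial.coe_inj.mp ?_⟩
    rw [hcoe, Polynomial.coe_mul, ← hQ]
    linear_combination -(1 - PowerSeries.X ^ d) * hF
  · rintro ⟨Q, hQ⟩
    refine ⟨Q, degree_lt_of_mul_eq_one_sub_X_pow hP hQ.symm, ?_⟩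
    rw [← hcoe, hQ, Polynomial.coe_mul]
    linear_combination (Q : R⟦X⟧) * hF

end Periodic

section Factors

variable {K : Type*} [Field K]

theorem degree_one_sub_C_mul_X {a : K} (ha : a ≠ 0) : (1 - C a * X).degree = 1 := by
  rw [degree_sub_eq_right_of_degree_lt, degree_C_mul_X ha]
  rw [degree_one, degree_C_mul_X ha]
  exact zero_lt_one

theorem isCoprime_one_sub_C_mul_X {a b : K} (hab : a ≠ b) :
    IsCoprime (1 - C a * X) (1 - C b * X) := by
  -- b (1 - a X) - a (1 - b X) = b - a
  refine ⟨C (b - a)⁻¹ * C b, -(C (b - a)⁻¹ * C a), ?_⟩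
  calc _ = C (b - a)⁻¹ * C (b - a) := by rw [map_sub]; ring
    _ = 1 := by rw [← map_mul, inv_mul_cancel₀ (sub_ne_zero.mpr hab.symm), map_one]

theorem one_sub_C_mul_X_dvd_one_sub_X_pow_iff {a : K} (ha : a ≠ 0) (d : ℕ) :
    1 - C a * X ∣ 1 - X ^ d ↔ a ^ d = 1 := by
  constructor
  · intro h
    have hroot : (1 - C a * X).IsRoot a⁻¹ := by simp [mul_inv_cancel₀ ha]
    have := (hroot.dvd h).eq_zero
    simp only [eval_sub, eval_one, eval_pow, eval_X, inv_pow, sub_eq_zero] at this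
    exact inv_eq_one.mp this.symm
  · intro h
    have := sub_dvd_pow_sub_pow (1 : K[X]) (C a * X) d
    rwa [one_pow, mul_pow, ← C_pow, h, C_1, one_mul] at this

theorem prod_one_sub_C_mul_X_dvd_one_sub_X_pow_iff {ι : Type*} [Fintype ι] {lam : ι → K}
    (hne : ∀ i, lam i ≠ 0) (hinj : Function.Injective lam) (d : ℕ) :
    ∏ i, (1 - C (lam i) * X) ∣ 1 - X ^ d ↔ ∀ i, lam i ^ d = 1 := by
  simp_rw [← one_sub_C_mul_X_dvd_one_sub_X_pow_iff (hne _)]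
  refine ⟨fun h i ↦ dvd_trans (Finset.dvd_prod_of_mem (fun i ↦ 1 - C (lam i) * X)
    (Finset.mem_univ i)) h, fun h ↦ ?_⟩
  apply Finset.prod_dvd_of_coprime _ fun i _ ↦ h i
  intro i _ j _ hij
  exact isCoprime_one_sub_C_mul_X (hinj.ne hij)

end Factors

/-- Periodicity criterion: a linear recursive sequence whose core polynomial
has nonzero, pairwise distinct roots `λ₁, …, λ_k` is periodic if and only if
every `λᵢ` is a root of unity. -/
theorem periodic_iff_roots_of_unity (k : ℕ) (hk : 1 ≤ k)
    (lam : Fin k → ℂ) (hne : ∀ i, lam i ≠ 0)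
    (hdist : ∀ i j, i ≠ j → lam i ≠ lam j) (f : ℕ → ℂ)
    (hf : (∏ i, (1 - PowerSeries.C (lam i) * PowerSeries.X)) *
      PowerSeries.mk f = 1) :
    (∃ d : ℕ, 1 ≤ d ∧ ∀ n : ℕ, f (n + d) = f n) ↔
      ∀ i, ∃ m : ℕ, 1 ≤ m ∧ lam i ^ m = 1 := by
  set P : ℂ[X] := ∏ i, (1 - C (lam i) * X)
  have hF : (P : ℂ⟦X⟧) * PowerSeries.mk f = 1 := by
    rw [← hf, ← coeToPowerSeries.ringHom_apply, map_prod]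
    simp [coeToPowerSeries.ringHom_apply]
  have hP : 0 < P.degree := by
    rw [degree_prod, Finset.sum_congr rfl fun i _ ↦ degree_one_sub_C_mul_X (hne i),
      Finset.sum_const, Finset.card_univ, Fintype.card_fin, nsmul_one, Nat.cast_withBot]
    exact WithBot.coe_pos.mpr hk
  have hper (d : ℕ) : (∀ n, f (n + d) = f n) ↔ ∀ i, lam i ^ d = 1 :=
    (periodic_iff_dvd_one_sub_X_pow hP hF).trans
      (prod_one_sub_C_mul_X_dvd_one_sub_X_pow_iff hne (fun i j ↦ not_imp_not.mp (hdist i j)) d)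
  simp_rw [hper]
  refine ⟨fun ⟨d, hd, h⟩ i ↦ ⟨d, hd, h i⟩, fun h ↦ ?_⟩
  obtain ⟨d, hd, hpow⟩ := isOfFinOrder_iff_pow_eq_one.mp
    (IsOfFinOrder.pi fun i ↦ isOfFinOrder_iff_pow_eq_one.mpr (h i))
  exact ⟨d, hd, fun i ↦ congrFun hpow i⟩
end

section
/- (Periodicity modulo p.) Let p be a prime, k ≥ 1, and t_1, …, t_k ∈ ZMod p with t_k ≠ 0, and suppose the core polynomial C(X) = X^k − t_1X^{k−1} − ⋯ − t_k is irreducible over ZMod p. Let F : ℕ → ZMod p be the generalized Fibonacci sequence of parameters t_1, …, t_k. Then F is purely periodic with period dividing p^k − 1: F_{n + (p^k − 1)} = F_n for all n ≥ 0. -/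
/-!
Let `C` be the core polynomial and `α` the class of `X` in the field `K = 𝔽_p[X]/(C)` with `p^k`
elements. Since `C(0) = -t_k ≠ 0`, `α ≠ 0`, so `α^(p^k - 1) = 1`. The coordinate of `α^n` on
`α^(k-1)` in the basis `1, α, …, α^(k-1)` satisfies the full order-`k` recurrence with initial
values `0, …, 0, 1`, and `F_n` is this coordinate at `n + k - 1`; the periodicity of `n ↦ α^n`
therefore passes to `F`.
-/

open Polynomial Finset

section Core

variable {R : Type*} [CommRing R] (t : ℕ → R) (k : ℕ)

noncomputable def gfpCore : R[X] := X ^ k - ∑ j ∈ Icc 1 k, C (t j) * X ^ (k - j)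

theorem degree_gfpCore_tail_lt :
    (∑ j ∈ Icc 1 k, C (t j) * X ^ (k - j)).degree < (k : WithBot ℕ) := by
  refine (degree_sum_le _ _).trans_lt <| (Finset.sup_lt_iff (WithBot.bot_lt_coe k)).mpr ?_
  intro j hj
  refine (degree_C_mul_X_pow_le _ _).trans_lt ?_
  have := mem_Icc.mp hj
  exact Nat.cast_lt.mpr (by omega)

theorem gfpCore_monic : (gfpCore t k).Monic := monic_X_pow_sub (degree_gfpCore_tail_lt t k)

theorem natDegree_gfpCore [Nontrivial R] : (gfpCore t k).natDegree = k :=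
  natDegree_eq_of_degree_eq_some <| (degree_sub_eq_left_of_degree_lt
    (by rw [degree_X_pow]; exact degree_gfpCore_tail_lt t k)).trans (degree_X_pow k)

theorem coeff_zero_gfpCore (hk : 1 ≤ k) : (gfpCore t k).coeff 0 = -t k := by
  rw [gfpCore, coeff_sub, coeff_X_pow, finsetSum_coeff, sum_eq_single k]
  · rw [if_neg (by omega), Nat.sub_self, pow_zero, mul_one, coeff_C_zero, zero_sub]
  · intro j hj hjk
    have := mem_Icc.mp hj
    rw [coeff_C_mul_X_pow, if_neg (by omega)]
  · exact fun hk' => absurd (mem_Icc.mpr ⟨hk, le_rfl⟩) hk'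

theorem pow_eq_sum_of_aeval_gfpCore_eq_zero {A : Type*} [Ring A] [Algebra R A] {α : A}
    (h : aeval α (gfpCore t k) = 0) {n : ℕ} (hn : k ≤ n) :
    α ^ n = ∑ j ∈ Icc 1 k, t j • α ^ (n - j) := by
  have hk : α ^ k = ∑ j ∈ Icc 1 k, t j • α ^ (k - j) := by
    rw [gfpCore, map_sub, map_pow, aeval_X, map_sum, sub_eq_zero] at h
    simpa only [map_mul, aeval_C, map_pow, aeval_X, ← Algebra.smul_def] using h
  obtain ⟨m, rfl⟩ := Nat.exists_eq_add_of_le' hn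
  rw [pow_add, hk, mul_sum]
  refine sum_congr rfl fun j hj => ?_
  rw [mul_smul_comm, ← pow_add, Nat.add_sub_assoc (mem_Icc.mp hj).2]

end Core

theorem gfp_eq_shift_of_recurrence {R : Type*} [CommSemiring R] {t : ℕ → R} {k : ℕ} (hk : 1 ≤ k)
    {F c : ℕ → R} (hF0 : F 0 = 1)
    (hF : ∀ n, 1 ≤ n → F n = ∑ j ∈ Icc 1 (min n k), t j * F (n - j))
    (hc_init : ∀ i < k, c i = if i = k - 1 then 1 else 0)
    (hc : ∀ n, k ≤ n → c n = ∑ j ∈ Icc 1 k, t j * c (n - j)) (n : ℕ) :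
    F n = c (n + (k - 1)) := by
  induction n using Nat.strong_induction_on with
  | _ n ih =>
    rcases Nat.eq_zero_or_pos n with rfl | hn
    · rw [hF0, zero_add, hc_init _ (by omega), if_pos rfl]
    have hvanish : ∀ j ∈ Icc 1 k, j ∉ Icc 1 (min n k) → t j * c (n + (k - 1) - j) = 0 := by
      intro j hj hjn
      simp only [mem_Icc] at hj hjn
      rw [hc_init _ (by omega), if_neg (by omega), mul_zero]
    rw [hF n hn, hc _ (by omega), ← sum_subset (Icc_subset_Icc_right (min_le_right n k)) hvanish]
    refine sum_congr rfl fun j hj => ?_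
    have := mem_Icc.mp hj
    rw [ih (n - j) (by omega), show n - j + (k - 1) = n + (k - 1) - j by omega]

theorem PowerBasis.coord_gen_pow {R S : Type*} [CommRing R] [Ring S] [Algebra R S]
    (pb : PowerBasis R S) (i : Fin pb.dim) {m : ℕ} (hm : m < pb.dim) :
    pb.basis.coord i (pb.gen ^ m) = if m = i then 1 else 0 := by
  rw [← Fin.val_mk hm, ← pb.basis_eq_pow, Module.Basis.coord_apply, Module.Basis.repr_self,
    Finsupp.single_apply]
  simp only [Fin.ext_iff]

theorem AdjoinRoot.root_pow_card_pow_natDegree_sub_one {K : Type*} [Field K] [Fintype K]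
    {f : K[X]} [Fact (Irreducible f)] (hf0 : f.coeff 0 ≠ 0) :
    root f ^ (Fintype.card K ^ f.natDegree - 1) = 1 := by
  let pb := powerBasis (Fact.out : Irreducible f).ne_zero
  let : Fintype (AdjoinRoot f) := Module.fintypeOfFintype pb.basis
  have hcard : Fintype.card (AdjoinRoot f) = Fintype.card K ^ f.natDegree := by
    rw [Module.card_fintype pb.basis, Fintype.card_fin, powerBasis_dim]
  have hroot : root f ≠ 0 := by
    intro h0
    have : aeval (root f) f = 0 := by rw [aeval_eq, mk_self]
    rw [h0, ← coeff_zero_eq_aeval_zero', map_eq_zero_iff _ (algebraMap K _).injective] at this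
    exact hf0 this
  rw [← hcard]
  exact FiniteField.pow_card_sub_one_eq_one _ hroot

/-- Periodicity modulo `p`: a GFP sequence over `ZMod p` whose core polynomial
is irreducible of degree `k` (with nonzero constant parameter `t_k`) is purely
periodic with period dividing `p^k − 1`. -/
theorem gfp_periodic_mod_p (p : ℕ) (hp : p.Prime) (k : ℕ) (hk : 1 ≤ k)
    (t : ℕ → ZMod p) (htk : t k ≠ 0)
    (hirr : Irreducible
      ((X : Polynomial (ZMod p)) ^ k - ∑ j ∈ Finset.Icc 1 k, C (t j) * X ^ (k - j)))
    (F : ℕ → ZMod p) (hF0 : F 0 = 1)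
    (hF : ∀ n, 1 ≤ n → F n = ∑ j ∈ Finset.Icc 1 (min n k), t j * F (n - j)) :
    ∀ n : ℕ, F (n + (p ^ k - 1)) = F n := by
  have : Fact p.Prime := ⟨hp⟩
  have : Fact (Irreducible (gfpCore t k)) := ⟨hirr⟩
  let pb := AdjoinRoot.powerBasis' (gfpCore_monic t k)
  have hdim : pb.dim = k := natDegree_gfpCore t k
  let c n := pb.basis.coord ⟨k - 1, by omega⟩ (pb.gen ^ n)
  have hroot : aeval pb.gen (gfpCore t k) = 0 := by
    rw [AdjoinRoot.powerBasis'_gen, AdjoinRoot.aeval_eq, AdjoinRoot.mk_self]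
  have hFc : ∀ n, F n = c (n + (k - 1)) := by
    refine gfp_eq_shift_of_recurrence hk hF0 hF (fun i hi => ?_) fun n hn => ?_
    · exact pb.coord_gen_pow _ (by omega)
    · simp only [c, pow_eq_sum_of_aeval_gfpCore_eq_zero t k hroot hn, map_sum, map_smul,
        smul_eq_mul]
  have hperiod : pb.gen ^ (p ^ k - 1) = 1 := by
    have hcoeff : (gfpCore t k).coeff 0 ≠ 0 := by
      rw [coeff_zero_gfpCore t k hk]
      exact neg_ne_zero.mpr htk
    have := AdjoinRoot.root_pow_card_pow_natDegree_sub_one hcoeff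
    rwa [ZMod.card, natDegree_gfpCore] at this
  intro n
  rw [hFc, hFc n, show n + (p ^ k - 1) + (k - 1) = n + (k - 1) + (p ^ k - 1) by omega]
  simp only [c, pow_add, hperiod, mul_one]
end
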